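/- Let n ≥ 3, a > 0, b ≥ 0, x̄ ∈ R^n, and let u(x) = (a/(1 + b²|x - x̄|²))^{(n-2)/2}. Then the conformal Hessian satisfies A^u(x) = 2b²a^{-2} I for all x ∈ R^n. -/

import Mathlib

/-!
Write `u = t ^ s` with `t = a / (1 + b² |x - x̄|²)` and `s = (n - 2) / 2`. Since
`∂ᵥ (t ^ s) = -(2 s b² / a) t ^ (s + 1) ⟪x - x̄, v⟫`, the gradient and the Hessian of `u` are
explicit multiples of powers of `t`, and the weights `u^(-(n+2)/(n-2)) = t^(-(s+2))`,
`u^(-2n/(n-2)) = t^(-2(s+1))` cancel all of them except one factor `1/t` in the `δᵢⱼ`-part of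
the Hessian term. That part contributes `2b²(1 + b²|x - x̄|²)/a² · δᵢⱼ`, the gradient-norm term
`-2b⁴|x - x̄|²/a² · δᵢⱼ`, and the two `yᵢ yⱼ` contributions (`y = x - x̄`) `∓ 2 n b⁴ / a²` cancel.
-/

noncomputable def confHess {n : ℕ} (u : EuclideanSpace ℝ (Fin n) → ℝ)
    (x : EuclideanSpace ℝ (Fin n)) : Matrix (Fin n) (Fin n) ℝ :=
  Matrix.of fun i j =>
    -(2 / ((n : ℝ) - 2)) * u x ^ (-(((n : ℝ) + 2) / ((n : ℝ) - 2))) *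
        fderiv ℝ (fun z => fderiv ℝ u z (EuclideanSpace.single j 1)) x
          (EuclideanSpace.single i 1)
    + (2 * (n : ℝ) / ((n : ℝ) - 2) ^ 2) * u x ^ (-(2 * (n : ℝ) / ((n : ℝ) - 2))) *
        fderiv ℝ u x (EuclideanSpace.single i 1) * fderiv ℝ u x (EuclideanSpace.single j 1)
    - (2 / ((n : ℝ) - 2) ^ 2) * u x ^ (-(2 * (n : ℝ) / ((n : ℝ) - 2))) *
        (∑ k : Fin n, fderiv ℝ u x (EuclideanSpace.single k 1) ^ 2) *
        (1 : Matrix (Fin n) (Fin n) ℝ) i j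

open RealInnerProductSpace

section Bubble

variable {E : Type*} [NormedAddCommGroup E] {a : ℝ} (b : ℝ) (x0 : E)

noncomputable def bubbleBase (a b : ℝ) (x0 : E) (w : E) : ℝ := a / (1 + b ^ 2 * ‖w - x0‖ ^ 2)

lemma one_add_mul_norm_sub_sq_pos (w : E) : 0 < 1 + b ^ 2 * ‖w - x0‖ ^ 2 := by positivity

lemma bubbleBase_pos (ha : 0 < a) (w : E) : 0 < bubbleBase a b x0 w :=
  div_pos ha (one_add_mul_norm_sub_sq_pos b x0 w)

variable [InnerProductSpace ℝ E]

lemma hasFDerivAt_one_add_mul_norm_sub_sq (z : E) :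
    HasFDerivAt (fun w => 1 + b ^ 2 * ‖w - x0‖ ^ 2) ((2 * b ^ 2) • innerSL ℝ (z - x0)) z := by
  have h := ((((hasFDerivAt_id z).sub_const x0).norm_sq).const_mul (b ^ 2)).const_add 1
  refine h.congr_fderiv ?_
  ext w
  simp only [smul_apply, Nat.cast_ofNat, ContinuousLinearMap.comp_apply, innerSL_apply_apply,
    id_eq, ContinuousLinearMap.coe_id', smul_eq_mul, nsmul_eq_mul]
  ring

lemma hasFDerivAt_bubbleBase (z : E) :
    HasFDerivAt (bubbleBase a b x0)
      ((-(2 * b ^ 2 / a) * bubbleBase a b x0 z ^ 2) • innerSL ℝ (z - x0)) z := by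
  have hq := one_add_mul_norm_sub_sq_pos b x0 z
  have h := ((hasDerivAt_inv hq.ne').comp_hasFDerivAt z
    (hasFDerivAt_one_add_mul_norm_sub_sq b x0 z)).const_mul a
  refine (h.congr_fderiv ?_).congr_of_eventuallyEq
    (Filter.Eventually.of_forall fun w => div_eq_mul_inv _ _)
  rw [smul_smul, smul_smul]
  congr 1
  unfold bubbleBase
  field_simp

lemma hasFDerivAt_bubbleBase_rpow (ha : 0 < a) (s : ℝ) (z : E) :
    HasFDerivAt (fun w => bubbleBase a b x0 w ^ s)
      ((-(2 * s * b ^ 2 / a) * bubbleBase a b x0 z ^ (s + 1)) • innerSL ℝ (z - x0)) z := by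
  have ht := bubbleBase_pos b x0 ha z
  refine ((hasFDerivAt_bubbleBase b x0 z).rpow_const (Or.inl ht.ne')).congr_fderiv ?_
  rw [smul_smul, Real.rpow_add ht, Real.rpow_one,
    show bubbleBase a b x0 z ^ s = bubbleBase a b x0 z ^ (s - 1) * bubbleBase a b x0 z by
      rw [← Real.rpow_add_one ht.ne', sub_add_cancel]]
  congr 1
  ring

lemma fderiv_bubbleBase_rpow_apply (ha : 0 < a) (s : ℝ) (z v : E) :
    fderiv ℝ (fun w => bubbleBase a b x0 w ^ s) z v =
      -(2 * s * b ^ 2 / a) * bubbleBase a b x0 z ^ (s + 1) * ⟪z - x0, v⟫ := by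
  rw [(hasFDerivAt_bubbleBase_rpow b x0 ha s z).fderiv]
  simp only [smul_apply, innerSL_apply_apply, smul_eq_mul]

lemma hasFDerivAt_inner_sub_const (v z : E) :
    HasFDerivAt (fun w => ⟪w - x0, v⟫) (innerSL ℝ v) z := by
  refine ((innerSL ℝ v).hasFDerivAt.comp z ((hasFDerivAt_id z).sub_const x0))
    |>.congr_of_eventuallyEq (Filter.Eventually.of_forall fun w => ?_)
  simp [real_inner_comm]

lemma fderiv_fderiv_bubbleBase_rpow_apply (ha : 0 < a) (s : ℝ) (x v w : E) :
    fderiv ℝ (fun z => fderiv ℝ (fun w => bubbleBase a b x0 w ^ s) z v) x w =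
      -(2 * s * b ^ 2 / a) * (bubbleBase a b x0 x ^ (s + 1) * ⟪w, v⟫ -
        2 * (s + 1) * b ^ 2 / a * bubbleBase a b x0 x ^ (s + 1 + 1) * ⟪x - x0, w⟫ *
          ⟪x - x0, v⟫) := by
  simp_rw [fderiv_bubbleBase_rpow_apply b x0 ha]
  rw [(((hasFDerivAt_bubbleBase_rpow b x0 ha (s + 1) x).const_mul (-(2 * s * b ^ 2 / a))).fun_mul
    (hasFDerivAt_inner_sub_const x0 v x)).fderiv]
  simp only [add_apply, smul_apply, innerSL_apply_apply, smul_eq_mul, real_inner_comm v w]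
  ring

end Bubble

lemma rpow_rpow_neg_add_two_div_sub_two {t m : ℝ} (ht : 0 < t) (hm : m ≠ 2) :
    (t ^ ((m - 2) / 2)) ^ (-((m + 2) / (m - 2))) = (t ^ ((m - 2) / 2 + 1 + 1))⁻¹ := by
  have hm' : m - 2 ≠ 0 := sub_ne_zero.mpr hm
  rw [← Real.rpow_mul ht.le, ← Real.rpow_neg ht.le]
  congr 1
  field_simp
  ring

lemma rpow_rpow_neg_two_mul_div_sub_two {t m : ℝ} (ht : 0 < t) (hm : m ≠ 2) :
    (t ^ ((m - 2) / 2)) ^ (-(2 * m / (m - 2))) = ((t ^ ((m - 2) / 2 + 1))⁻¹) ^ 2 := by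
  have hm' : m - 2 ≠ 0 := sub_ne_zero.mpr hm
  rw [← Real.rpow_mul ht.le, ← Real.rpow_neg ht.le, ← Real.rpow_natCast, ← Real.rpow_mul ht.le]
  congr 1
  field_simp
  push_cast
  ring

lemma bubble_confHess_entry_eq {m a b c t P S y₁ y₂ δ : ℝ} (hm : m ≠ 2) (ha : a ≠ 0)
    (hP : P ≠ 0) (hq : 1 + b ^ 2 * S ≠ 0) (hc : c = -(2 * ((m - 2) / 2) * b ^ 2 / a))
    (ht : t = a / (1 + b ^ 2 * S)) :
    -(2 / (m - 2)) * (P * t)⁻¹ *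
          (c * (P * δ - 2 * ((m - 2) / 2 + 1) * b ^ 2 / a * (P * t) * y₁ * y₂))
        + 2 * m / (m - 2) ^ 2 * P⁻¹ ^ 2 * (c * P * y₁) * (c * P * y₂)
        - 2 / (m - 2) ^ 2 * P⁻¹ ^ 2 * (c ^ 2 * P ^ 2 * S) * δ =
      2 * b ^ 2 / a ^ 2 * δ := by
  have hm' : m - 2 ≠ 0 := sub_ne_zero.mpr hm
  subst hc ht
  field_simp
  ring

theorem stmt13_general {n : ℕ} (hn : 3 ≤ n) (a b : ℝ) (ha : 0 < a)
    (x0 : EuclideanSpace ℝ (Fin n))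
    (u : EuclideanSpace ℝ (Fin n) → ℝ)
    (hu : ∀ x, u x = (a / (1 + b ^ 2 * ‖x - x0‖ ^ 2)) ^ (((n : ℝ) - 2) / 2)) :
    ∀ x, confHess u x = (2 * b ^ 2 / a ^ 2) • (1 : Matrix (Fin n) (Fin n) ℝ) := by
  intro x
  obtain rfl : u = fun w => bubbleBase a b x0 w ^ (((n : ℝ) - 2) / 2) := funext hu
  have hn2 : (n : ℝ) ≠ 2 := by
    norm_cast
    omega
  have ht := bubbleBase_pos b x0 ha x
  ext i j
  simp only [confHess, Matrix.of_apply, Matrix.smul_apply, smul_eq_mul]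
  rw [fderiv_fderiv_bubbleBase_rpow_apply b x0 ha]
  simp only [fderiv_bubbleBase_rpow_apply b x0 ha, EuclideanSpace.inner_single_right,
    conj_trivial, one_mul, rpow_rpow_neg_add_two_div_sub_two ht hn2,
    rpow_rpow_neg_two_mul_div_sub_two ht hn2, mul_pow, ← Finset.mul_sum,
    ← EuclideanSpace.real_norm_sq_eq]
  have hδ : (EuclideanSpace.single i (1 : ℝ)) j = (1 : Matrix (Fin n) (Fin n) ℝ) i j := by
    simp [Matrix.one_apply, eq_comm]
  rw [hδ, Real.rpow_add_one ht.ne']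
  exact bubble_confHess_entry_eq hn2 ha.ne' (Real.rpow_pos_of_pos ht _).ne'
    (one_add_mul_norm_sub_sq_pos b x0 x).ne' rfl rfl

theorem stmt13 {n : ℕ} (hn : 3 ≤ n) (a b : ℝ) (ha : 0 < a) (hb : 0 ≤ b)
    (x0 : EuclideanSpace ℝ (Fin n))
    (u : EuclideanSpace ℝ (Fin n) → ℝ)
    (hu : ∀ x, u x = (a / (1 + b ^ 2 * ‖x - x0‖ ^ 2)) ^ (((n : ℝ) - 2) / 2)) :
    ∀ x, confHess u x = (2 * b ^ 2 / a ^ 2) • (1 : Matrix (Fin n) (Fin n) ℝ) :=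
  stmt13_general hn a b ha x0 u hu
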